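/- arXiv:1512.08904 — 6 statements merged into one kernel-verified Lean document; each statement's English description precedes it below -/
import Mathlib

section
/- Let p be a prime and n ≥ 1. If integers a_0, a_1, ..., a_{p^n - 1} satisfy ∑_{j=0}^{p^n-1} a_j ω^j = 0 where ω = e^{2πi/p^n}, then for every 0 ≤ i ≤ p^{n-1} - 1 and every 0 ≤ j ≤ p-1, a_i = a_{i + j p^{n-1}}. -/
/-!
Let `ζ = exp(2πi/p^n)`, `m = p^(n-1)` and `P = ∑ a_j X^j ∈ ℤ[X]`. Since `P(ζ) = 0` and the
cyclotomic polynomial `Φ_{p^n} = 1 + X^m + ⋯ + X^{m(p-1)}` is the minimal polynomial of `ζ`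
over `ℤ`, we get `P = Φ_{p^n} Q` with `Q ∈ ℤ[X]`, and comparing degrees gives `deg Q < m`.
Hence the blocks `X^{jm} Q` of the product do not overlap, and the coefficient of `X^{i + jm}`
in `P` is `Q.coeff i` for every `j < p`.
-/

open Polynomial Finset

namespace Polynomial

variable {R : Type*}

theorem coeff_sum_range_C_mul_X_pow [Semiring R] (a : ℕ → R) (N k : ℕ) :
    (∑ j ∈ range N, C (a j) * X ^ j).coeff k = if k < N then a k else 0 := by
  simp

theorem degree_sum_range_C_mul_X_pow_lt [Semiring R] (a : ℕ → R) (N : ℕ) :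
    (∑ j ∈ range N, C (a j) * X ^ j).degree < (N : WithBot ℕ) :=
  (degree_lt_iff_coeff_zero _ _).2 fun k hk => by
    rw [coeff_sum_range_C_mul_X_pow, if_neg hk.not_gt]

theorem Monic.degree_lt_of_degree_mul_lt [Semiring R] {F Q : R[X]} (hF : F.Monic) {m : ℕ}
    (h : (Q * F).degree < (F.natDegree + m : ℕ)) : Q.degree < m := by
  nontriviality R
  rw [hF.degree_mul, degree_eq_natDegree hF.ne_zero] at h
  rcases eq_or_ne Q 0 with rfl | hQ
  · exact degree_zero.trans_lt (WithBot.bot_lt_coe m)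
  rw [degree_eq_natDegree hQ, ← Nat.cast_add, Nat.cast_lt] at h
  rw [degree_eq_natDegree hQ, Nat.cast_lt]
  omega

theorem coeff_geom_sum_X_pow_mul [Semiring R] {m p : ℕ} {Q : R[X]} (hQ : Q.degree < m)
    {i j : ℕ} (hi : i < m) (hj : j < p) :
    ((∑ l ∈ range p, (X ^ m) ^ l) * Q).coeff (i + j * m) = Q.coeff i := by
  rw [sum_mul, finsetSum_coeff, sum_eq_single_of_mem j (mem_range.2 hj)]
  · rw [← pow_mul, coeff_X_pow_mul', mul_comm m j, if_pos (by omega), Nat.add_sub_cancel]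
  · intro l _ hlj
    rw [← pow_mul, coeff_X_pow_mul']
    rcases hlj.lt_or_gt with hlt | hgt
    · have : m * l + m ≤ j * m := by nlinarith
      rw [if_pos (by omega)]
      exact coeff_eq_zero_of_degree_lt (hQ.trans_le (by exact_mod_cast (by omega)))
    · have : j * m + m ≤ m * l := by nlinarith
      rw [if_neg (by omega)]

theorem cyclotomic_dvd_of_aeval_eq_zero {K : Type*} [Field K] [CharZero K] {μ : K} {N : ℕ}
    (hμ : IsPrimitiveRoot μ N) (hN : 0 < N) {P : ℤ[X]} (h : aeval μ P = 0) :
    cyclotomic N ℤ ∣ P :=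
  cyclotomic_eq_minpoly hμ hN ▸ minpoly.isIntegrallyClosed_dvd (hμ.isIntegral hN) h

end Polynomial

/-- If integers `a_0, ..., a_{p^n-1}` satisfy `∑ a_j ω^j = 0` with `ω = e^{2πi/p^n}`,
then `a_i = a_{i + j p^{n-1}}` for all `0 ≤ i ≤ p^{n-1}-1` and `0 ≤ j ≤ p-1`. -/
theorem stmt0 (p : ℕ) (hp : p.Prime) (n : ℕ) (hn : 1 ≤ n) (a : ℕ → ℤ)
    (h : ∑ j ∈ Finset.range (p ^ n),
        (a j : ℂ) * Complex.exp (2 * Real.pi * Complex.I * j / (p ^ n : ℕ)) = 0) :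
    ∀ i < p ^ (n - 1), ∀ j < p, a i = a (i + j * p ^ (n - 1)) := by
  obtain ⟨k, rfl⟩ : ∃ k, n = k + 1 := ⟨n - 1, by omega⟩
  rw [Nat.add_sub_cancel]
  intro i hi j hj
  set P : ℤ[X] := ∑ j ∈ range (p ^ (k + 1)), C (a j) * X ^ j
  have hpos : 0 < p ^ (k + 1) := pow_pos hp.pos _
  have hroot : aeval (Complex.exp (2 * Real.pi * Complex.I / (p ^ (k + 1) : ℕ))) P = 0 := by
    rw [← h, map_sum]
    refine sum_congr rfl fun j _ => ?_
    rw [map_mul, aeval_C, map_pow, aeval_X, ← Complex.exp_nat_mul, algebraMap_int_eq, eq_intCast]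
    ring_nf
  obtain ⟨Q, hPQ⟩ := cyclotomic_dvd_of_aeval_eq_zero
    (Complex.isPrimitiveRoot_exp _ hpos.ne') hpos hroot
  have hQ : Q.degree < (p ^ k : ℕ) := by
    refine (cyclotomic.monic (p ^ (k + 1)) ℤ).degree_lt_of_degree_mul_lt ?_
    rw [mul_comm, ← hPQ, natDegree_cyclotomic, Nat.totient_prime_pow_succ hp]
    convert degree_sum_range_C_mul_X_pow_lt a _ using 2
    rw [pow_succ, Nat.mul_sub, mul_one, Nat.sub_add_cancel (Nat.le_mul_of_pos_right _ hp.pos)]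
  rw [cyclotomic_prime_pow_eq_geom_sum hp] at hPQ
  have hcoeff : ∀ j < p, a (i + j * p ^ k) = Q.coeff i := fun j hj => by
    have hlt : i + j * p ^ k < p ^ (k + 1) := by rw [pow_succ]; nlinarith
    rw [← coeff_geom_sum_X_pow_mul hQ hi hj, ← hPQ, coeff_sum_range_C_mul_X_pow, if_pos hlt]
  have hcoeff_i := hcoeff 0 hp.pos
  rw [zero_mul, add_zero] at hcoeff_i
  rw [hcoeff_i, hcoeff j hj]
end

section
/- Let p be a prime, n ≥ 1, and (b_0, ..., b_{p-1}) ∈ ℤ^p. If ∑_{j=0}^{p-1} e^{2πi b_j/p^n} = 0, then there is a permutation σ of {0,...,p-1} and an integer r with 0 ≤ r ≤ p^{n-1} - 1 such that b_{σ(j)} ≡ r + j p^{n-1} (mod p^n) for all j = 0, ..., p-1. -/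
open Polynomial Finset

/-- Reindexing a sum over `range (d * p)` by quotient and remainder mod `d`. -/
lemma sum_range_mul_aux {M : Type*} [AddCommMonoid M] (f : ℕ → M) (d p : ℕ) (hd : 0 < d) :
    ∑ k ∈ range (d * p), f k = ∑ s ∈ range d, ∑ q ∈ range p, f (s + q * d) := by
  rw [← Finset.sum_product']
  refine Finset.sum_nbij' (fun k => (k % d, k / d)) (fun x => x.1 + x.2 * d) ?_ ?_ ?_ ?_ ?_
  · intro k hk
    rw [Finset.mem_range] at hk
    rw [Finset.mem_product, Finset.mem_range, Finset.mem_range]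
    exact ⟨Nat.mod_lt _ hd, Nat.div_lt_of_lt_mul (by omega)⟩
  · rintro ⟨s, q⟩ hx
    rw [Finset.mem_product, Finset.mem_range, Finset.mem_range] at hx
    rw [Finset.mem_range]
    calc s + q * d < d + q * d := by omega
      _ = (q + 1) * d := by ring
      _ ≤ p * d := Nat.mul_le_mul_right _ (by omega)
      _ = d * p := by ring
  · intro k _
    exact Nat.mod_add_div' k d
  · rintro ⟨s, q⟩ hx
    rw [Finset.mem_product, Finset.mem_range, Finset.mem_range] at hx
    have h1 : (s + q * d) % d = s := by
      rw [Nat.add_mul_mod_self_right, Nat.mod_eq_of_lt hx.1]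
    have h2 : (s + q * d) / d = q := by
      rw [Nat.add_mul_div_right _ _ hd, Nat.div_eq_of_lt hx.1, Nat.zero_add]
    simp [h1, h2]
  · intro k _
    simp [Nat.mod_add_div' k d]

lemma div_mod_inj_aux {d s q s' q' : ℕ} (hs : s < d) (hs' : s' < d)
    (h : s + q * d = s' + q' * d) : s = s' ∧ q = q' := by
  have h1 : s = s' := by
    have := congrArg (· % d) h
    simpa [Nat.add_mul_mod_self_right, Nat.mod_eq_of_lt hs, Nat.mod_eq_of_lt hs'] using this
  subst h1
  have : q * d = q' * d := by omega
  exact ⟨rfl, Nat.eq_of_mul_eq_mul_right (by omega) this⟩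

/-- If `∑_{j=0}^{p-1} e^{2πi b_j/p^n} = 0`, then after a permutation of the `b_j`'s there
exists `0 ≤ r ≤ p^{n-1}-1` with `b_{σ(j)} ≡ r + j p^{n-1} (mod p^n)` for all `j`. -/
theorem stmt1 (p : ℕ) (hp : p.Prime) (n : ℕ) (hn : 1 ≤ n) (b : Fin p → ℤ)
    (h : ∑ j : Fin p,
        Complex.exp (2 * Real.pi * Complex.I * (b j) / (p ^ n : ℕ)) = 0) :
    ∃ (σ : Equiv.Perm (Fin p)) (r : ℤ), 0 ≤ r ∧ r ≤ (p : ℤ) ^ (n - 1) - 1 ∧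
      ∀ j : Fin p, b (σ j) ≡ r + (j : ℤ) * (p : ℤ) ^ (n - 1) [ZMOD ((p : ℤ) ^ n)] := by
  classical
  have hp2 := hp.two_le
  obtain ⟨m, rfl⟩ : ∃ m, n = m + 1 := ⟨n - 1, by omega⟩
  obtain ⟨e, he⟩ : ∃ e, p = e + 1 := ⟨p - 1, by omega⟩
  have he1 : 1 ≤ e := by omega
  set N := p ^ (m + 1) with hNdef
  set d := p ^ m with hddef
  have hNpos : 0 < N := pow_pos hp.pos _
  have hdpos : 0 < d := pow_pos hp.pos _
  have hdp : d * p = N := by rw [hNdef, hddef, ← pow_succ]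
  have hNne : N ≠ 0 := hNpos.ne'
  haveI : NeZero N := ⟨hNne⟩
  set ζ : ℂ := Complex.exp (2 * Real.pi * Complex.I / N) with hζdef
  have hζ : IsPrimitiveRoot ζ N := Complex.isPrimitiveRoot_exp N hNne
  have hζne : ζ ≠ 0 := Complex.exp_ne_zero _
  -- the reduced exponents
  set a : Fin p → ℕ := fun j => ((b j : ZMod N)).val with hadef
  have ha_lt : ∀ j, a j < N := fun j => ZMod.val_lt _
  have hab : ∀ j, (N : ℤ) ∣ b j - (a j : ℤ) := by
    intro j
    have : ((b j - (a j : ℤ) : ℤ) : ZMod N) = 0 := by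
      push_cast
      rw [hadef]
      simp [ZMod.natCast_val, ZMod.intCast_cast]
    exact (ZMod.intCast_zmod_eq_zero_iff_dvd _ _).mp this
  -- rewrite hypothesis as a sum of powers of ζ
  have hsum : ∑ j : Fin p, ζ ^ (a j) = 0 := by
    rw [← h]
    refine Finset.sum_congr rfl fun j _ => ?_
    have h1 : ζ ^ (a j : ℤ) = ζ ^ (b j) := by
      obtain ⟨t, ht⟩ := hab j
      have : b j = (a j : ℤ) + N * t := by linarith
      rw [this, zpow_add₀ hζne, zpow_mul, zpow_natCast, zpow_natCast, hζ.pow_eq_one]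
      simp
    have h2 : Complex.exp (2 * Real.pi * Complex.I * (b j) / (N : ℕ)) = ζ ^ (b j) := by
      rw [hζdef, ← Complex.exp_int_mul]
      ring_nf
    rw [h2, ← h1, zpow_natCast]
  -- counts
  set c : ℕ → ℕ := fun k => (Finset.univ.filter (fun j => a j = k)).card with hcdef
  have hc_sum : ∑ k ∈ Finset.range N, c k = p := by
    have h1 : ∑ k ∈ Finset.range N, c k = (Finset.univ : Finset (Fin p)).card :=
      (Finset.card_eq_sum_card_fiberwise (fun j _ => Finset.mem_range.mpr (ha_lt j))).symm
    rw [h1, Finset.card_univ, Fintype.card_fin]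
  have hzsum : ∑ k ∈ Finset.range N, (c k : ℂ) * ζ ^ k = 0 := by
    rw [← hsum]
    rw [← Finset.sum_fiberwise_of_maps_to (g := a) (t := Finset.range N)
      (fun j _ => Finset.mem_range.mpr (ha_lt j)) (fun j => ζ ^ (a j))]
    refine Finset.sum_congr rfl fun k _ => ?_
    rw [hcdef]
    rw [Finset.sum_congr rfl (fun j hj => by
      rw [(Finset.mem_filter.mp hj).2]), Finset.sum_const, nsmul_eq_mul]
  -- geometric sum of the p-th roots of unity
  have hζd : IsPrimitiveRoot (ζ ^ d) p := by
    exact hζ.pow hNpos hdp.symm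
  have hfull : ∀ s : ℕ, ∑ q ∈ Finset.range p, ζ ^ (s + q * d) = 0 := by
    intro s
    have h0 : ∑ q ∈ Finset.range p, (ζ ^ d) ^ q = 0 := hζd.geom_sum_eq_zero (by omega)
    calc ∑ q ∈ Finset.range p, ζ ^ (s + q * d)
        = ζ ^ s * ∑ q ∈ Finset.range p, (ζ ^ d) ^ q := by
          rw [Finset.mul_sum]
          refine Finset.sum_congr rfl fun q _ => ?_
          rw [← pow_mul, ← pow_add, mul_comm d q]
      _ = 0 := by rw [h0, mul_zero]
  have hfull' : ∀ s : ℕ, ∑ q ∈ Finset.range e, ζ ^ (s + q * d) = - ζ ^ (s + e * d) := by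
    intro s
    have h0 := hfull s
    rw [he, Finset.sum_range_succ] at h0
    exact eq_neg_of_add_eq_zero_left h0
  -- the key polynomial
  set Q : Polynomial ℚ := ∑ s ∈ Finset.range d, ∑ q ∈ Finset.range e,
    (Polynomial.C ((c (s + q * d) : ℚ) - (c (s + e * d) : ℚ)) * Polynomial.X ^ (s + q * d))
    with hQdef
  have hQz : Polynomial.aeval ζ Q = 0 := by
    rw [hQdef]
    rw [map_sum]
    have step : ∀ s ∈ Finset.range d,
        (Polynomial.aeval ζ) (∑ q ∈ Finset.range e,
          Polynomial.C ((c (s + q * d) : ℚ) - (c (s + e * d) : ℚ)) * Polynomial.X ^ (s + q * d))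
        = ∑ q ∈ Finset.range p, (c (s + q * d) : ℂ) * ζ ^ (s + q * d) := by
      intro s _
      rw [map_sum]
      have lhs_eq : ∀ q ∈ Finset.range e,
          (Polynomial.aeval ζ) (Polynomial.C ((c (s + q * d) : ℚ) - (c (s + e * d) : ℚ))
            * Polynomial.X ^ (s + q * d))
          = ((c (s + q * d) : ℂ) - (c (s + e * d) : ℂ)) * ζ ^ (s + q * d) := by
        intro q _
        simp [Polynomial.aeval_C]
      rw [Finset.sum_congr rfl lhs_eq]
      have expand : ∑ q ∈ Finset.range e, ((c (s + q * d) : ℂ) - (c (s + e * d) : ℂ)) * ζ ^ (s + q * d)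
          = (∑ q ∈ Finset.range e, (c (s + q * d) : ℂ) * ζ ^ (s + q * d))
            - (c (s + e * d) : ℂ) * ∑ q ∈ Finset.range e, ζ ^ (s + q * d) := by
        rw [Finset.mul_sum, ← Finset.sum_sub_distrib]
        refine Finset.sum_congr rfl fun q _ => by ring
      rw [expand, hfull' s]
      rw [he, Finset.sum_range_succ]
      ring
    rw [Finset.sum_congr rfl step]
    rw [← sum_range_mul_aux (fun k => (c k : ℂ) * ζ ^ k) d p hdpos, hdp, hzsum]
  -- Q has degree less than the degree of the minimal polynomial of ζ, hence Q = 0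
  have hQ0 : Q = 0 := by
    by_contra hQne
    have hdvd : minpoly ℚ ζ ∣ Q := minpoly.dvd ℚ ζ hQz
    have hmindeg : (minpoly ℚ ζ).natDegree = d * e := by
      rw [← Polynomial.cyclotomic_eq_minpoly_rat hζ hNpos, Polynomial.natDegree_cyclotomic,
        hNdef, Nat.totient_prime_pow hp (by omega)]
      simp [hddef, he]
    have hQdeg : Q.natDegree < d * e := by
      have hle : Q.natDegree ≤ d * e - 1 := by
        rw [hQdef]
        refine Polynomial.natDegree_sum_le_of_forall_le _ _ fun s hs => ?_
        refine Polynomial.natDegree_sum_le_of_forall_le _ _ fun q hq => ?_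
        refine le_trans (Polynomial.natDegree_C_mul_X_pow_le _ _) ?_
        rw [Finset.mem_range] at hs hq
        have : q * d ≤ (e - 1) * d := Nat.mul_le_mul_right _ (by omega)
        have h2 : (e - 1) * d = e * d - d := by
          cases e with
          | zero => omega
          | succ e' => simp [Nat.succ_sub_one, Nat.succ_mul]
        have h3 : e * d = d * e := mul_comm _ _
        have h4 : d ≤ d * e := Nat.le_mul_of_pos_right d (by omega)
        omega
      have : 0 < d * e := Nat.mul_pos hdpos (by omega)
      omega
    have := Polynomial.eq_zero_of_dvd_of_natDegree_lt hdvd (by rw [hmindeg]; exact hQdeg)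
    exact hQne this
  -- extract coefficient equalities
  have hcc : ∀ s < d, ∀ q < e, c (s + q * d) = c (s + e * d) := by
    intro s hs q hq
    have h0 : Q.coeff (s + q * d) = 0 := by rw [hQ0]; simp
    rw [hQdef] at h0
    rw [Polynomial.finset_sum_coeff] at h0
    have inner : ∀ s' ∈ Finset.range d,
        (∑ q' ∈ Finset.range e,
          Polynomial.C ((c (s' + q' * d) : ℚ) - (c (s' + e * d) : ℚ))
            * Polynomial.X ^ (s' + q' * d)).coeff (s + q * d)
        = if s' = s then ((c (s + q * d) : ℚ) - (c (s + e * d) : ℚ)) else 0 := by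
      intro s' hs'
      rw [Finset.mem_range] at hs'
      rw [Polynomial.finset_sum_coeff]
      by_cases hss : s' = s
      · subst hss
        rw [if_pos rfl]
        rw [Finset.sum_eq_single q]
        · rw [Polynomial.coeff_C_mul, Polynomial.coeff_X_pow, if_pos rfl, mul_one]
        · intro q' _ hq'
          rw [Polynomial.coeff_C_mul, Polynomial.coeff_X_pow, if_neg, mul_zero]
          intro hcontra
          exact hq' (div_mod_inj_aux hs' hs' hcontra.symm).2
        · intro hq'
          exact absurd (Finset.mem_range.mpr hq) hq'
      · rw [if_neg hss]
        refine Finset.sum_eq_zero fun q' _ => ?_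
        rw [Polynomial.coeff_C_mul, Polynomial.coeff_X_pow, if_neg, mul_zero]
        intro hcontra
        exact hss (div_mod_inj_aux hs' hs hcontra.symm).1
    rw [Finset.sum_congr rfl inner, Finset.sum_ite_eq' (Finset.range d) s,
      if_pos (Finset.mem_range.mpr hs)] at h0
    have : (c (s + q * d) : ℚ) = (c (s + e * d) : ℚ) := by linarith
    exact_mod_cast this
  -- counting argument
  have hsum1 : ∑ s ∈ Finset.range d, c (s + e * d) = 1 := by
    have hcount : p = p * ∑ s ∈ Finset.range d, c (s + e * d) := by
      calc p = ∑ k ∈ Finset.range N, c k := hc_sum.symm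
        _ = ∑ s ∈ Finset.range d, ∑ q ∈ Finset.range p, c (s + q * d) := by
          rw [← hdp]; exact sum_range_mul_aux c d p hdpos
        _ = ∑ s ∈ Finset.range d, p * c (s + e * d) := by
          refine Finset.sum_congr rfl fun s hs => ?_
          rw [Finset.mem_range] at hs
          rw [Finset.sum_congr rfl (fun q hq => ?_), Finset.sum_const, Finset.card_range,
            smul_eq_mul]
          rw [Finset.mem_range] at hq
          rcases Nat.lt_or_ge q e with hqe | hqe
          · exact hcc s hs q hqe
          · have : q = e := by omega
            rw [this]
        _ = p * ∑ s ∈ Finset.range d, c (s + e * d) := by rw [Finset.mul_sum]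
    exact (Nat.eq_of_mul_eq_mul_left hp.pos (by omega)).symm
  have hex : ∃ r ∈ Finset.range d, c (r + e * d) ≠ 0 := by
    by_contra hcon
    push_neg at hcon
    rw [Finset.sum_eq_zero (fun s hs => hcon s hs)] at hsum1
    exact absurd hsum1 (by omega)
  obtain ⟨r, hrd, hr0⟩ := hex
  have hrlt : r < d := Finset.mem_range.mp hrd
  have hsplit : c (r + e * d) + ∑ s ∈ (Finset.range d).erase r, c (s + e * d) = 1 := by
    have h0 := Finset.add_sum_erase (Finset.range d) (fun s => c (s + e * d)) hrd
    simpa using h0.trans hsum1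
  have hmr1 : c (r + e * d) = 1 := by omega
  have herase0 : ∑ s ∈ (Finset.range d).erase r, c (s + e * d) = 0 := by omega
  -- each fiber over r + q * d has exactly one element
  have hcr : ∀ q < p, c (r + q * d) = 1 := by
    intro q hq
    rcases Nat.lt_or_ge q e with hqe | hqe
    · rw [hcc r hrlt q hqe]; exact hmr1
    · have : q = e := by omega
      rw [this]; exact hmr1
  have hfib : ∀ q : Fin p, ∃ j : Fin p,
      (Finset.univ.filter (fun j => a j = r + q.val * d)) = {j} := by
    intro q
    exact Finset.card_eq_one.mp (hcr q.val q.isLt)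
  choose f hf using hfib
  have hfa : ∀ q, a (f q) = r + q.val * d := by
    intro q
    have : f q ∈ Finset.univ.filter (fun j => a j = r + q.val * d) :=
      (hf q) ▸ Finset.mem_singleton_self _
    exact (Finset.mem_filter.mp this).2
  have hinj : Function.Injective f := by
    intro q q' hqq'
    have h1 : r + q.val * d = r + q'.val * d := by rw [← hfa q, ← hfa q', hqq']
    have h2 : q.val * d = q'.val * d := by omega
    exact Fin.ext (Nat.eq_of_mul_eq_mul_right hdpos h2)
  refine ⟨Equiv.ofBijective f (Finite.injective_iff_bijective.mp hinj), (r : ℤ),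
    Int.natCast_nonneg r, ?_, ?_⟩
  · have hrc : (r : ℤ) < (p : ℤ) ^ m := by exact_mod_cast (hddef ▸ hrlt : r < p ^ m)
    simp only [Nat.add_sub_cancel]
    omega
  · intro j
    have hσ : (Equiv.ofBijective f (Finite.injective_iff_bijective.mp hinj)) j = f j := rfl
    rw [hσ]
    have h1 : ((r + j.val * d : ℕ) : ℤ) = (r : ℤ) + (j : ℤ) * (p : ℤ) ^ (m + 1 - 1) := by
      simp only [Nat.add_sub_cancel]
      push_cast [hddef]
      ring
    have h2 : ((p : ℤ) ^ (m + 1)) ∣ ((r : ℤ) + (j : ℤ) * (p : ℤ) ^ (m + 1 - 1)) - b (f j) := by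
      have hd := hab (f j)
      rw [hfa j, h1] at hd
      have hNc : ((N : ℕ) : ℤ) = (p : ℤ) ^ (m + 1) := by push_cast [hNdef]; ring
      rw [hNc] at hd
      have := dvd_neg.mpr hd
      rwa [neg_sub] at this
    exact Int.modEq_iff_dvd.mpr h2
end

section
/- Let p be a prime and C ⊂ ℚ_p a finite set with ∑_{c∈C} χ(c) = 0, where χ(x) = e^{2πi{x}} is the standard additive character of ℚ_p ({x} denotes the p-adic fractional part). Then p divides Card(C), and for every x ∈ ℤ_p^× one also has ∑_{c∈C} χ(x c) = 0. -/
/-!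
Choose `N` with `p ^ N • C ⊆ ℤ_[p]`. Then `χ(c) = ψ(p ^ N c mod p ^ N)` for the standard character
`ψ` of `ZMod (p ^ N)`, so `χ(c) = ζ ^ e_c` for the primitive root of unity `ζ = e^{2πi/p^N}`.
Hence `ζ` is a root of `f = ∑ X ^ e_c ∈ ℤ[X]`, and the cyclotomic polynomial `Φ_{p^N}` divides `f`.
Evaluating at `1` gives `p = Φ_{p^N}(1) ∣ f(1) = #C`. Multiplying by a unit `x ≡ u mod p ^ N`
replaces `ζ` by the primitive root `ζ ^ u`, which is again a root of `Φ_{p^N}`, hence of `f`.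
-/

/-- The standard additive character `χ(x) = e^{2πi {x}}` of `ℚ_[p]`, where `{x}` is the
p-adic fractional part of `x`. -/
noncomputable def stdChar (p : ℕ) [hp : Fact p.Prime] (x : ℚ_[p]) : ℂ :=
  let n : ℕ := (-x.valuation).toNat
  let y : ℤ_[p] := ⟨(p : ℚ_[p]) ^ n * x, by
    by_cases hx : x = 0
    · simp [hx]
    · rw [Padic.padicNormE.mul, norm_pow, Padic.norm_p, Padic.norm_eq_zpow_neg_valuation hx]
      have h1 : (1:ℝ) < p := by exact_mod_cast hp.out.one_lt
      have h0 : (0:ℝ) < p := by positivity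
      rw [inv_pow, ← zpow_natCast, ← zpow_neg, ← zpow_add₀ (ne_of_gt h0)]
      apply zpow_le_one_of_nonpos₀ h1.le
      have h2 : -x.valuation ≤ ((-x.valuation).toNat : ℤ) := Int.self_le_toNat _
      omega⟩
  Complex.exp (2 * Real.pi * Complex.I * ((y.appr n : ℂ) / (p : ℂ) ^ n))

open Polynomial

namespace ZMod

variable {ι : Type*} {n : ℕ} [NeZero n]

lemma stdAddChar_mul_eq_pow (u a : ZMod n) : stdAddChar (u * a) = stdAddChar u ^ a.val := by
  rw [← AddChar.map_nsmul_eq_pow, nsmul_eq_mul, natCast_zmod_val, mul_comm]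

lemma isPrimitiveRoot_stdAddChar_one : IsPrimitiveRoot (stdAddChar (1 : ZMod n)) n := by
  have h := stdAddChar_coe (N := n) 1
  rw [Int.cast_one, Int.cast_one, mul_one] at h
  rw [h]
  exact Complex.isPrimitiveRoot_exp n (NeZero.ne n)

lemma isPrimitiveRoot_stdAddChar {u : ZMod n} (hu : IsUnit u) :
    IsPrimitiveRoot (stdAddChar u) n := by
  have := isPrimitiveRoot_stdAddChar_one.pow_of_coprime _ (val_coe_unit_coprime hu.unit)
  rwa [← stdAddChar_mul_eq_pow, one_mul] at this

lemma aeval_stdAddChar_sum_X_pow (s : Finset ι) (u : ZMod n) (a : ι → ZMod n) :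
    aeval (stdAddChar u) (∑ i ∈ s, X ^ (a i).val : ℤ[X]) = ∑ i ∈ s, stdAddChar (u * a i) := by
  simp only [map_sum, map_pow, aeval_X, stdAddChar_mul_eq_pow]

lemma cyclotomic_dvd_of_sum_stdAddChar_eq_zero (s : Finset ι) (a : ι → ZMod n)
    (h : ∑ i ∈ s, stdAddChar (a i) = 0) :
    cyclotomic n ℤ ∣ ∑ i ∈ s, X ^ (a i).val := by
  have hζ := isPrimitiveRoot_stdAddChar_one (n := n)
  rw [cyclotomic_eq_minpoly hζ (NeZero.pos n)]
  refine minpoly.isIntegrallyClosed_dvd (hζ.isIntegral (NeZero.pos n)) ?_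
  simpa only [aeval_stdAddChar_sum_X_pow, one_mul] using h

lemma sum_stdAddChar_mul_eq_zero_of_isUnit (s : Finset ι) (a : ι → ZMod n)
    (h : ∑ i ∈ s, stdAddChar (a i) = 0) {u : ZMod n} (hu : IsUnit u) :
    ∑ i ∈ s, stdAddChar (u * a i) = 0 := by
  obtain ⟨g, hg⟩ := cyclotomic_dvd_of_sum_stdAddChar_eq_zero s a h
  have hroot : aeval (stdAddChar u) (cyclotomic n ℤ) = 0 := by
    simpa [aeval_def, eval₂_eq_eval_map, IsRoot.def] using
      (isPrimitiveRoot_stdAddChar hu).isRoot_cyclotomic (NeZero.pos n)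
  rw [← aeval_stdAddChar_sum_X_pow, hg, map_mul, hroot, zero_mul]

lemma prime_dvd_card_of_sum_stdAddChar_eq_zero {p N : ℕ} [Fact p.Prime] (hN : N ≠ 0)
    (s : Finset ι) (a : ι → ZMod (p ^ N)) (h : ∑ i ∈ s, stdAddChar (a i) = 0) :
    p ∣ s.card := by
  obtain ⟨g, hg⟩ := cyclotomic_dvd_of_sum_stdAddChar_eq_zero s a h
  obtain ⟨k, rfl⟩ := Nat.exists_eq_succ_of_ne_zero hN
  have := congrArg (eval 1) hg
  simp only [eval_finsetSum, eval_pow, eval_X, one_pow, Finset.sum_const, nsmul_eq_mul,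
    mul_one, eval_mul, eval_one_cyclotomic_prime_pow] at this
  exact Int.natCast_dvd_natCast.mp ⟨_, this⟩

end ZMod

open Complex Filter
open scoped Real

section

variable {p : ℕ} [Fact p.Prime]

lemma exp_int_div_pow_eq_of_norm_sub_le_one {a b : ℤ} {m n : ℕ}
    (h : ‖(a : ℚ_[p]) / p ^ m - b / p ^ n‖ ≤ 1) :
    exp (2 * π * I * a / p ^ m) = exp (2 * π * I * b / p ^ n) := by
  have hp : (p : ℚ_[p]) ≠ 0 := Nat.cast_ne_zero.mpr (Fact.out : p.Prime).ne_zero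
  have hk : ((a * p ^ n - b * p ^ m : ℤ) : ℚ_[p]) = p ^ (m + n) * (a / p ^ m - b / p ^ n) := by
    push_cast
    field_simp
    ring
  obtain ⟨t, ht⟩ : (p : ℤ) ^ (m + n) ∣ a * p ^ n - b * p ^ m := by
    rw [← Padic.norm_int_le_pow_iff_dvd, hk, norm_mul, norm_pow, Padic.norm_p, inv_pow,
      zpow_neg, zpow_natCast]
    exact mul_le_of_le_one_right (by positivity) h
  have hpC : (p : ℂ) ≠ 0 := Nat.cast_ne_zero.mpr (Fact.out : p.Prime).ne_zero
  refine exp_eq_exp_iff_exists_int.mpr ⟨t, ?_⟩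
  have htC : (a : ℂ) * p ^ n - b * p ^ m = p ^ (m + n) * t := by exact_mod_cast ht
  field_simp
  linear_combination htC

lemma norm_sub_div_pow_le_one {x : ℚ_[p]} {z : ℤ_[p]} {k N : ℕ} (hz : (z : ℚ_[p]) = p ^ N * x)
    (h : z - k ∈ Ideal.span {(p : ℤ_[p]) ^ N}) : ‖x - k / p ^ N‖ ≤ 1 := by
  rw [← PadicInt.norm_le_pow_iff_mem_span_pow] at h
  have hp : (0 : ℝ) < p := Nat.cast_pos.mpr (Fact.out : p.Prime).pos
  have hx : x = z / p ^ N := by rw [hz, mul_div_cancel_left₀ _ (pow_ne_zero _ (mod_cast hp.ne'))]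
  calc ‖x - k / p ^ N‖ = ‖z - k‖ * p ^ (N : ℤ) := by
        rw [hx, ← sub_div, norm_div, norm_pow, Padic.norm_p, inv_pow, div_inv_eq_mul,
          zpow_natCast]
        rfl
    _ ≤ p ^ (-N : ℤ) * p ^ (N : ℤ) := by gcongr
    _ = 1 := by rw [← zpow_add₀ hp.ne', neg_add_cancel, zpow_zero]

lemma stdChar_eq_exp_of_norm_sub_le_one {x : ℚ_[p]} {a : ℤ} {n : ℕ}
    (h : ‖x - a / p ^ n‖ ≤ 1) : stdChar p x = exp (2 * π * I * a / p ^ n) := by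
  obtain ⟨y, m, hχ, hy⟩ : ∃ (y : ℤ_[p]) (m : ℕ),
      stdChar p x = exp (2 * π * I * ((y.appr m : ℂ) / p ^ m)) ∧ (y : ℚ_[p]) = p ^ m * x :=
    ⟨_, _, rfl, by rfl⟩
  have happr : ‖x - (y.appr m : ℤ) / p ^ m‖ ≤ 1 := by
    rw [Int.cast_natCast]
    exact norm_sub_div_pow_le_one hy (PadicInt.appr_spec m y)
  rw [hχ, ← mul_div_assoc, ← Int.cast_natCast]
  refine exp_int_div_pow_eq_of_norm_sub_le_one ?_
  rw [← dist_eq_norm] at h happr ⊢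
  rw [dist_comm] at happr
  exact (dist_triangle_max _ x _).trans (max_le happr h)

lemma stdChar_eq_stdAddChar_toZModPow {x : ℚ_[p]} {z : ℤ_[p]} {N : ℕ}
    (hz : (z : ℚ_[p]) = p ^ N * x) :
    stdChar p x = ZMod.stdAddChar (PadicInt.toZModPow N z) := by
  have hk : z - (PadicInt.toZModPow N z).val ∈ Ideal.span {(p : ℤ_[p]) ^ N} := by
    rw [← PadicInt.ker_toZModPow, RingHom.mem_ker, map_sub, map_natCast, ZMod.natCast_zmod_val,
      sub_self]
  rw [ZMod.stdAddChar_apply, ZMod.toCircle_apply,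
    stdChar_eq_exp_of_norm_sub_le_one (a := (PadicInt.toZModPow N z).val)]
  · push_cast
    rfl
  · rw [Int.cast_natCast]
    exact norm_sub_div_pow_le_one hz hk

lemma eventually_norm_pow_mul_le_one (x : ℚ_[p]) : ∀ᶠ n in atTop, ‖(p : ℚ_[p]) ^ n * x‖ ≤ 1 := by
  have h : Tendsto (fun n => (p : ℚ_[p]) ^ n * x) atTop (nhds 0) := by
    simpa using (tendsto_pow_atTop_nhds_zero_of_norm_lt_one Padic.norm_p_lt_one).mul_const x
  filter_upwards [h.eventually (Metric.closedBall_mem_nhds 0 one_pos)] with n hn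
  simpa using hn

end

/-- If `C ⊂ ℚ_p` is a finite set with `∑_{c ∈ C} χ(c) = 0`, then `p` divides `Card C`
and `∑_{c ∈ C} χ(x c) = 0` for every p-adic unit `x`. -/
theorem stmt3 (p : ℕ) [Fact p.Prime] (C : Finset ℚ_[p])
    (h : ∑ c ∈ C, stdChar p c = 0) :
    p ∣ C.card ∧ ∀ x : ℚ_[p], ‖x‖ = 1 → ∑ c ∈ C, stdChar p (x * c) = 0 := by
  obtain ⟨N, hC, hN⟩ := (((eventually_all_finset C).2 fun c _ =>
    eventually_norm_pow_mul_le_one c).and (eventually_ne_atTop 0)).exists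
  let y (c : C) : ℤ_[p] := ⟨p ^ N * c, hC c c.2⟩
  let a (c : C) : ZMod (p ^ N) := PadicInt.toZModPow N (y c)
  have hχ (u : ℤ_[p]) (c : C) :
      stdChar p (u * c) = ZMod.stdAddChar (PadicInt.toZModPow N u * a c) := by
    rw [stdChar_eq_stdAddChar_toZModPow (z := u * y c), map_mul]
    rw [PadicInt.coe_mul, mul_left_comm]
  have ha : ∑ c : C, ZMod.stdAddChar (a c) = 0 := by
    rw [← h, ← Finset.sum_coe_sort C]
    exact Finset.sum_congr rfl fun c _ => by simpa using (hχ 1 c).symm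
  refine ⟨?_, fun x hx => ?_⟩
  · simpa using ZMod.prime_dvd_card_of_sum_stdAddChar_eq_zero hN _ a ha
  · have hu : IsUnit (PadicInt.toZModPow N ⟨x, hx.le⟩) := (PadicInt.isUnit_iff.mpr hx).map _
    rw [← Finset.sum_coe_sort C, ← ZMod.sum_stdAddChar_mul_eq_zero_of_isUnit _ a ha hu]
    exact Finset.sum_congr rfl fun c _ => hχ ⟨x, hx.le⟩ c
end

section
/- Let p be a prime and Ω ⊂ ℚ_p a Borel set with 0 < m(Ω) < ∞. If (Ω, T) is a tiling pair, i.e. ∑_{t∈T} 1_Ω(x - t) = 1 for almost every x ∈ ℚ_p, then T is uniformly discrete: there exists n₀ ∈ ℤ such that |t - t'|_p > p^{n₀} for all distinct t, t' ∈ T. -/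
open MeasureTheory Filter Topology
open scoped Pointwise ENNReal

noncomputable instance (p : ℕ) [Fact p.Prime] : MeasurableSpace ℚ_[p] := borel _
instance (p : ℕ) [Fact p.Prime] : BorelSpace ℚ_[p] := ⟨rfl⟩

/-- Haar measure on `ℚ_[p]`, normalized so that `ℤ_p` (the closed unit ball) has measure 1. -/
noncomputable def haarQp (p : ℕ) [Fact p.Prime] : Measure ℚ_[p] :=
  Measure.addHaarMeasure
    ⟨⟨Metric.closedBall 0 1, isCompact_closedBall 0 1⟩,
      ⟨0, by
        rw [mem_interior_iff_mem_nhds]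
        exact Metric.closedBall_mem_nhds 0 one_pos⟩⟩

/-!
If `(Ω, T)` tiles, almost every point lies in at most one translate `t + Ω`,
so `m(Ω ∩ (Ω + t - t')) = 0` for distinct `t, t' ∈ T`. On the other hand
`x ↦ m(Ω ∩ (Ω + x))` is positive near `0` (continuity of translation on a compact
`K ⊆ Ω` of positive measure). Hence `t - t'` stays outside a fixed ball around `0`.
-/

theorem measure_inter_vadd_eq_zero_of_tiling {G : Type*} [AddCommGroup G] [MeasurableSpace G]
    [MeasurableAdd G] {μ : Measure G} [μ.IsAddLeftInvariant] {Ω T : Set G}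
    (htile : ∀ᵐ x ∂μ, ∑' t : T, Ω.indicator (fun _ => (1 : ℝ)) (x - t) = 1)
    {t t' : G} (ht : t ∈ T) (ht' : t' ∈ T) (hne : t ≠ t') :
    μ (Ω ∩ ((t - t') +ᵥ Ω)) = 0 := by
  classical
  have hdisjoint : ∀ᵐ x ∂μ, x ∉ {x | x - t ∈ Ω ∧ x - t' ∈ Ω} := by
    filter_upwards [htile] with x hx ⟨hxt, hxt'⟩
    have hsum : Summable fun s : T => Ω.indicator (fun _ => (1 : ℝ)) (x - s) := by
      by_contra h
      simp [tsum_eq_zero_of_not_summable h] at hx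
    have hle := hsum.sum_le_tsum {⟨t, ht⟩, ⟨t', ht'⟩}
      fun s _ => Set.indicator_nonneg (fun _ _ => zero_le_one) _
    rw [Finset.sum_pair (by simpa using hne), hx, Set.indicator_of_mem hxt,
      Set.indicator_of_mem hxt'] at hle
    norm_num at hle
  have htranslate : Ω ∩ ((t - t') +ᵥ Ω) = (t' + ·) ⁻¹' {x | x - t ∈ Ω ∧ x - t' ∈ Ω} := by
    ext y
    simp only [Set.mem_inter_iff, Set.mem_vadd_set_iff_neg_vadd_mem, vadd_eq_add,
      Set.mem_preimage, Set.mem_ofPred_eq, add_sub_cancel_left]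
    rw [and_comm, show -(t - t') + y = t' + y - t by abel]
  rw [htranslate, measure_preimage_add]
  exact measure_eq_zero_iff_ae_notMem.2 hdisjoint

theorem eventually_nhds_zero_measure_inter_vadd_pos {G : Type*} [AddGroup G]
    [TopologicalSpace G] [IsTopologicalAddGroup G] [LocallyCompactSpace G] [T2Space G]
    [MeasurableSpace G] [BorelSpace G] {μ : Measure G} [μ.IsAddLeftInvariant]
    [IsFiniteMeasureOnCompacts μ] [μ.InnerRegular] {Ω : Set G} (hΩ : MeasurableSet Ω)
    (hpos : 0 < μ Ω) : ∀ᶠ g in 𝓝 (0 : G), (0 : ℝ≥0∞) < μ (Ω ∩ (g +ᵥ Ω)) := by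
  obtain ⟨K, hKΩ, hK, hKpos⟩ := hΩ.exists_lt_isCompact hpos
  filter_upwards [eventually_nhds_zero_measure_vadd_sdiff_lt hK hK.isClosed hKpos.ne' (μ := μ)]
    with g hg
  have hKg : 0 < μ ((g +ᵥ K) ∩ K) := by
    refine pos_iff_ne_zero.2 fun hnull => ?_
    rw [measure_sdiff_null' hnull, measure_vadd] at hg
    exact hg.false
  refine hKg.trans_le (measure_mono ?_)
  rw [Set.inter_comm]
  exact Set.inter_subset_inter hKΩ (Set.vadd_set_mono hKΩ)

theorem exists_zpow_forall_norm_le_of_eventually {E : Type*} [SeminormedAddGroup E]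
    {P : E → Prop} (hP : ∀ᶠ x in 𝓝 0, P x) {r : ℝ} (hr : 1 < r) :
    ∃ n : ℤ, ∀ x, ‖x‖ ≤ r ^ n → P x := by
  obtain ⟨ε, hε, hball⟩ := Metric.eventually_nhds_iff.1 hP
  obtain ⟨n, hn⟩ := exists_pow_lt_of_lt_one hε (inv_lt_one_of_one_lt₀ hr)
  refine ⟨-n, fun x hx => hball ?_⟩
  rw [dist_zero_right]
  calc ‖x‖ ≤ r ^ (-n : ℤ) := hx
    _ = r⁻¹ ^ n := by rw [zpow_neg, zpow_natCast, inv_pow]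
    _ < ε := hn

instance (p : ℕ) [Fact p.Prime] : (haarQp p).IsAddHaarMeasure := by
  unfold haarQp; infer_instance

instance (p : ℕ) [Fact p.Prime] : (haarQp p).InnerRegular := by
  unfold haarQp; infer_instance

theorem stmt11_general (p : ℕ) [Fact p.Prime] (Ω : Set ℚ_[p]) (hΩ : MeasurableSet Ω)
    (h0 : 0 < haarQp p Ω) (T : Set ℚ_[p])
    (htile : ∀ᵐ x ∂(haarQp p),
      ∑' t : T, Set.indicator Ω (fun _ => (1 : ℝ)) (x - t) = 1) :
    ∃ n₀ : ℤ, ∀ t ∈ T, ∀ t' ∈ T, t ≠ t' → (p : ℝ) ^ n₀ < ‖t - t'‖ := by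
  have hp : (1 : ℝ) < p := mod_cast (Fact.out : p.Prime).one_lt
  obtain ⟨n₀, hn₀⟩ := exists_zpow_forall_norm_le_of_eventually
    (eventually_nhds_zero_measure_inter_vadd_pos hΩ h0) hp
  refine ⟨n₀, fun t ht t' ht' hne => lt_of_not_ge fun hle => ?_⟩
  exact (hn₀ _ hle).ne' (measure_inter_vadd_eq_zero_of_tiling htile ht ht' hne)

/-- If `(Ω, T)` is a tiling pair in `ℚ_p`, then `T` is uniformly discrete. -/
theorem stmt11 (p : ℕ) [Fact p.Prime] (Ω : Set ℚ_[p]) (hΩ : MeasurableSet Ω)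
    (h0 : 0 < haarQp p Ω) (hfin : haarQp p Ω < ⊤) (T : Set ℚ_[p])
    (htile : ∀ᵐ x ∂(haarQp p),
      ∑' t : T, Set.indicator Ω (fun _ => (1 : ℝ)) (x - t) = 1) :
    ∃ n₀ : ℤ, ∀ t ∈ T, ∀ t' ∈ T, t ≠ t' → (p : ℝ) ^ n₀ < ‖t - t'‖ :=
  stmt11_general p Ω hΩ h0 T htile
end

section
/- Let p be a prime, E ⊂ ℚ_p a uniformly discrete set, and f ∈ L¹(ℚ_p) nonnegative with ∫ f dm > 0, satisfying ∑_{λ∈E} f(x-λ) = 1 for a.e. x. Then E has a bounded density: the limit D(E) = lim_{k→∞} Card(E ∩ B(x₀, p^k))/m(B(x₀, p^k)) exists, is independent of x₀ ∈ ℚ_p, and equals 1/∫_{ℚ_p} f dm. -/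
/-
Put `ρ = f · m`. Integrating the tiling identity over a ball `B = B(x₀, r)` gives
`m(B) = ∑_{λ ∈ E} ρ(B - λ)`. By the ultrametric inequality, `B - λ` equals `B(0, r)` when
`λ ∈ B` and is disjoint from it otherwise, so `m(B) = #(E ∩ B) · ρ(B(0, r)) + T` where `T` only
sees `ρ` outside `B(0, r)`. Separation makes the balls of radius `ε` around the points of `E`
disjoint, so no point lies in more than `m(B) / m(B(0, ε))` of the translates `B - λ`; hence
`T ≤ m(B) · ρ(B(0, r)ᶜ) / m(B(0, ε)) = o(m(B))`. Dividing by `m(B)` and letting `r → ∞`,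
`#(E ∩ B) / m(B) → 1 / ρ(ℚ_p) = 1 / ∫ f`.
-/

open MeasureTheory

open Measure Metric Filter Topology
open scoped ENNReal

lemma ENNReal.tsum_subtype_indicator_const {α : Type*} (E s : Set α) (c : ℝ≥0∞) :
    ∑' l : E, s.indicator (fun _ => c) l = (E ∩ s).encard * c := by
  rw [tsum_subtype E, Set.indicator_indicator, ← tsum_subtype, ENNReal.tsum_set_const]

lemma ENNReal.tsum_ofReal_eq_one {ι : Type*} {g : ι → ℝ} (hg : ∀ i, 0 ≤ g i)
    (h : ∑' i, g i = 1) : ∑' i, ENNReal.ofReal (g i) = 1 := by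
  have hsum : Summable g := by
    by_contra hns
    rw [tsum_eq_zero_of_not_summable hns] at h
    exact zero_ne_one h
  rw [← ENNReal.ofReal_tsum_of_nonneg hg hsum, h, ENNReal.ofReal_one]

lemma tsum_measure_le_mul_of_forall_tsum_indicator_le {α ι : Type*} [MeasurableSpace α]
    [Countable ι] (ρ : Measure α) {S : ι → Set α} (hS : ∀ i, MeasurableSet (S i)) {n : ℝ≥0∞}
    (hn : ∀ y, ∑' i, (S i).indicator 1 y ≤ n) :
    ∑' i, ρ (S i) ≤ n * ρ Set.univ := by
  calc ∑' i, ρ (S i) = ∑' i, ∫⁻ y, (S i).indicator 1 y ∂ρ := by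
        simp_rw [lintegral_indicator_one (hS _)]
    _ = ∫⁻ y, ∑' i, (S i).indicator 1 y ∂ρ :=
        (lintegral_tsum fun i => (measurable_one.indicator (hS i)).aemeasurable).symm
    _ ≤ ∫⁻ _, n ∂ρ := lintegral_mono hn
    _ = n * ρ Set.univ := lintegral_const n

lemma measure_eq_tsum_withDensity_preimage_add {G ι : Type*} [AddGroup G] [MeasurableSpace G]
    [MeasurableAdd G] (μ : Measure G) [μ.IsAddRightInvariant] [Countable ι] (a : ι → G)
    {F : G → ℝ≥0∞} (hF : AEMeasurable F μ) (htile : ∀ᵐ x ∂μ, ∑' i, F (x - a i) = 1)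
    {s : Set G} (hs : MeasurableSet s) :
    μ s = ∑' i, μ.withDensity F ((· + a i) ⁻¹' s) := by
  have hshift : ∀ i, ∫⁻ x in s, F (x - a i) ∂μ = μ.withDensity F ((· + a i) ⁻¹' s) := fun i => by
    rw [withDensity_apply _ (hs.preimage (measurable_add_const _)),
      ← (measurePreserving_add_right μ (a i)).setLIntegral_comp_preimage_emb
        (measurableEmbedding_addRight (a i))]
    simp only [add_sub_cancel_right]
  have hmeas : ∀ i, AEMeasurable (fun x => F (x - a i)) (μ.restrict s) := fun i =>
    (hF.comp_quasiMeasurePreserving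
      (measurePreserving_sub_right μ _).quasiMeasurePreserving).restrict
  calc μ s = ∫⁻ x in s, ∑' i, F (x - a i) ∂μ := by
        rw [setLIntegral_congr_fun_ae hs (htile.mono fun x hx _ => hx), setLIntegral_const, one_mul]
    _ = ∑' i, μ.withDensity F ((· + a i) ⁻¹' s) := by
        rw [lintegral_tsum hmeas]; exact tsum_congr hshift

lemma tendsto_div_of_eq_mul_add {ι : Type*} {l : Filter ι} {m N a T : ι → ℝ} {I : ℝ}
    (hI : I ≠ 0) (hm : ∀ᶠ i in l, 0 < m i) (heq : ∀ᶠ i in l, m i = N i * a i + T i)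
    (ha : Tendsto a l (𝓝 I)) (hT : Tendsto (fun i => T i / m i) l (𝓝 0)) :
    Tendsto (fun i => N i / m i) l (𝓝 (1 / I)) := by
  have hlim : Tendsto (fun i => (1 - T i / m i) / a i) l (𝓝 ((1 - 0) / I)) :=
    (tendsto_const_nhds.sub hT).div ha hI
  rw [sub_zero] at hlim
  refine hlim.congr' ?_
  filter_upwards [hm, heq, ha.eventually_ne hI] with i hmi heqi hai
  rw [heqi] at hmi ⊢
  field_simp
  ring

section
variable {α : Type*} [PseudoMetricSpace α] [MeasurableSpace α] (ρ : Measure α) (x : α)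

lemma tendsto_measure_closedBall_atTop :
    Tendsto (fun r => ρ (closedBall x r)) atTop (𝓝 (ρ Set.univ)) := by
  have h := tendsto_measure_iUnion_atTop (μ := ρ) (s := closedBall x)
    fun _ _ => closedBall_subset_closedBall
  rwa [Set.iUnion_eq_univ_iff.2 fun y => ⟨dist y x, mem_closedBall.2 le_rfl⟩] at h

lemma tendsto_measure_compl_closedBall_atTop [OpensMeasurableSpace α] [IsFiniteMeasure ρ] :
    Tendsto (fun r => ρ (closedBall x r)ᶜ) atTop (𝓝 0) := by
  have h := tendsto_measure_iInter_atTop (μ := ρ) (s := fun r => (closedBall x r)ᶜ)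
    (fun _ => measurableSet_closedBall.compl.nullMeasurableSet)
    (fun _ _ hrs => Set.compl_subset_compl.2 (closedBall_subset_closedBall hrs))
    ⟨0, measure_ne_top ρ _⟩
  rwa [← Set.compl_iUnion, Set.iUnion_eq_univ_iff.2 fun y => ⟨dist y x, mem_closedBall.2 le_rfl⟩,
    Set.compl_univ, measure_empty] at h
end

section Ultrametric

variable {G : Type*} [NormedAddCommGroup G] [IsUltrametricDist G]

open scoped Classical in
lemma IsUltrametricDist.preimage_add_closedBall_inter_closedBall_zero (x₀ l : G) (r : ℝ) :
    (· + l) ⁻¹' closedBall x₀ r ∩ closedBall 0 r =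
      if l ∈ closedBall x₀ r then closedBall 0 r else ∅ := by
  rw [preimage_add_right_closedBall]
  split_ifs with hl
  · rw [← closedBall_eq_of_mem (x := 0) (y := x₀ - l), Set.inter_self]
    rwa [mem_closedBall_zero_iff, norm_sub_rev, ← dist_eq_norm]
  · refine Set.eq_empty_of_forall_notMem fun z ⟨hz, hz₀⟩ => hl ?_
    rw [mem_closedBall, dist_eq_norm] at hz ⊢
    rw [mem_closedBall_zero_iff] at hz₀
    calc ‖l - x₀‖ = ‖z - (x₀ - l) + -z‖ := by congr 1; abel
      _ ≤ r := (norm_add_le_max _ _).trans (max_le hz (by rwa [norm_neg]))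

lemma IsUltrametricDist.pairwiseDisjoint_ball {E : Set G} {ε : ℝ}
    (hsep : E.Pairwise (ε ≤ dist · ·)) : E.PairwiseDisjoint (ball · ε) := by
  intro x hx y hy hxy
  refine Set.disjoint_left.2 fun z hzx hzy => (hsep hx hy hxy).not_gt ?_
  calc dist x y ≤ max (dist x z) (dist z y) := dist_triangle_max x z y
    _ < ε := max_lt (by rwa [dist_comm]) hzy

variable [MeasurableSpace G] [BorelSpace G] (μ : Measure G) [μ.IsAddHaarMeasure]

lemma IsUltrametricDist.encard_inter_closedBall_mul_le {E : Set G} {ε r : ℝ}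
    (hsep : E.Pairwise (ε ≤ dist · ·)) (hεr : ε ≤ r) (c : G) :
    (E ∩ closedBall c r).encard * μ (ball 0 ε) ≤ μ (closedBall 0 r) := by
  calc (E ∩ closedBall c r).encard * μ (ball 0 ε)
      = ∑' e : ↥(E ∩ closedBall c r), μ (ball (e : G) ε) := by
        simp_rw [addHaar_ball_center, ENNReal.tsum_set_const]
    _ ≤ μ (⋃ e : ↥(E ∩ closedBall c r), ball (e : G) ε) :=
        tsum_meas_le_meas_iUnion_of_disjoint μ (fun _ => measurableSet_ball)
          fun e e' he => (pairwiseDisjoint_ball hsep) e.2.1 e'.2.1 (Subtype.coe_injective.ne he)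
    _ ≤ μ (closedBall c r) := by
        refine measure_mono (Set.iUnion_subset fun e z hz => ?_)
        exact (closedBall_eq_of_mem e.2.2).symm ▸ ball_subset_closedBall.trans
          (closedBall_subset_closedBall hεr) hz
    _ = μ (closedBall 0 r) := addHaar_closedBall_center μ c r

variable [ProperSpace G]

lemma IsUltrametricDist.finite_inter_closedBall {E : Set G} {ε : ℝ} (hε : 0 < ε)
    (hsep : E.Pairwise (ε ≤ dist · ·)) (c : G) (r : ℝ) : (E ∩ closedBall c r).Finite := by
  refine Set.Finite.subset ?_ (Set.inter_subset_inter_right E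
    (closedBall_subset_closedBall (le_max_left r ε)))
  have h := encard_inter_closedBall_mul_le addHaar hsep (le_max_right r ε) c
  rw [← Set.encard_ne_top_iff]
  intro htop
  rw [htop, ENat.toENNReal_top, ENNReal.top_mul (measure_ball_pos _ _ hε).ne', top_le_iff] at h
  exact measure_closedBall_lt_top.ne h

lemma IsUltrametricDist.countable_of_pairwise_le_dist {E : Set G} {ε : ℝ} (hε : 0 < ε)
    (hsep : E.Pairwise (ε ≤ dist · ·)) : E.Countable := by
  rw [← Set.inter_univ E, ← iUnion_closedBall_nat (0 : G), Set.inter_iUnion]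
  exact Set.countable_iUnion fun n => (finite_inter_closedBall hε hsep 0 n).countable

lemma IsUltrametricDist.measure_closedBall_eq_encard_mul_add {E : Set G} {ε r : ℝ} (hε : 0 < ε)
    (hsep : E.Pairwise (ε ≤ dist · ·)) (hεr : ε ≤ r) {F : G → ℝ≥0∞} (hF : AEMeasurable F μ)
    (htile : ∀ᵐ x ∂μ, ∑' l : E, F (x - l) = 1) (x₀ : G) :
    ∃ T ≤ μ (closedBall 0 r) / μ (ball 0 ε) * μ.withDensity F (closedBall 0 r)ᶜ,
      μ (closedBall x₀ r) =
        (E ∩ closedBall x₀ r).encard * μ.withDensity F (closedBall 0 r) + T := by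
  classical
  set ρ := μ.withDensity F
  have : Countable E := (countable_of_pairwise_le_dist hε hsep).to_subtype
  set S : E → Set G := fun l => (· + (l : G)) ⁻¹' closedBall x₀ r
  have hS : ∀ l, MeasurableSet (S l) := fun l =>
    measurableSet_closedBall.preimage (measurable_add_const _)
  refine ⟨∑' l, ρ (S l \ closedBall 0 r), ?_, ?_⟩
  · have hcount : ∀ y, ∑' l, (S l).indicator 1 y ≤ μ (closedBall 0 r) / μ (ball 0 ε) := by
      intro y
      have hS_iff : ∀ l : E, (S l).indicator (1 : G → ℝ≥0∞) y =
          (closedBall (x₀ - y) r).indicator (fun _ => 1) (l : G) := fun l => by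
        simp only [S, Set.indicator, Set.mem_preimage, mem_closedBall, dist_eq_norm]
        rw [sub_sub_eq_add_sub, add_comm y]
        rfl
      rw [tsum_congr hS_iff, ENNReal.tsum_subtype_indicator_const, mul_one,
        ENNReal.le_div_iff_mul_le (Or.inl (measure_ball_pos μ _ hε).ne')
          (Or.inr measure_closedBall_lt_top.ne)]
      exact encard_inter_closedBall_mul_le μ hsep hεr _
    calc ∑' l, ρ (S l \ closedBall 0 r) = ∑' l, ρ.restrict (closedBall 0 r)ᶜ (S l) := by
          simp_rw [Measure.restrict_apply (hS _), Set.sdiff_eq]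
      _ ≤ _ := tsum_measure_le_mul_of_forall_tsum_indicator_le _ hS hcount
      _ = _ := by rw [Measure.restrict_apply_univ]
  · have hinter : ∀ l : E, ρ (S l ∩ closedBall 0 r) =
        (closedBall x₀ r).indicator (fun _ => ρ (closedBall 0 r)) (l : G) := fun l => by
      rw [preimage_add_closedBall_inter_closedBall_zero]
      split_ifs with h <;> simp [h]
    rw [measure_eq_tsum_withDensity_preimage_add μ Subtype.val hF htile measurableSet_closedBall]
    rw [tsum_congr fun l => (measure_inter_add_sdiff (S l) measurableSet_closedBall).symm,
      ENNReal.tsum_add, tsum_congr hinter, ENNReal.tsum_subtype_indicator_const]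

lemma IsUltrametricDist.toReal_measure_closedBall_eq_card_mul_add {E : Set G} {ε r : ℝ}
    (hε : 0 < ε) (hsep : E.Pairwise (ε ≤ dist · ·)) (hεr : ε ≤ r) {F : G → ℝ≥0∞}
    (hF : AEMeasurable F μ) [IsFiniteMeasure (μ.withDensity F)]
    (htile : ∀ᵐ x ∂μ, ∑' l : E, F (x - l) = 1) (x₀ : G) :
    ∃ t, 0 ≤ t ∧ t / (μ (closedBall x₀ r)).toReal ≤
        (μ.withDensity F (closedBall 0 r)ᶜ).toReal / (μ (ball 0 ε)).toReal ∧
      (μ (closedBall x₀ r)).toReal =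
        Nat.card ↥(E ∩ closedBall x₀ r) * (μ.withDensity F (closedBall 0 r)).toReal + t := by
  obtain ⟨T, hT, heq⟩ := measure_closedBall_eq_encard_mul_add μ hε hsep hεr hF htile x₀
  have hbound_ne_top : μ (closedBall 0 r) / μ (ball 0 ε) * μ.withDensity F (closedBall 0 r)ᶜ ≠ ∞ :=
    ENNReal.mul_ne_top (ENNReal.div_ne_top measure_closedBall_lt_top.ne
      (measure_ball_pos μ _ hε).ne') (measure_ne_top _ _)
  refine ⟨T.toReal, ENNReal.toReal_nonneg, div_le_of_le_mul₀ ENNReal.toReal_nonneg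
    (by positivity) ?_, ?_⟩
  · have h := ENNReal.toReal_mono hbound_ne_top hT
    rw [ENNReal.toReal_mul, ENNReal.toReal_div] at h
    rw [addHaar_closedBall_center μ x₀ r]
    exact h.trans_eq (by ring)
  · rw [heq, ← (finite_inter_closedBall hε hsep x₀ r).cast_ncard_eq, ENat.toENNReal_coe,
      ENNReal.toReal_add (ENNReal.mul_ne_top (ENNReal.natCast_ne_top _) (measure_ne_top _ _))
        (ne_top_of_le_ne_top hbound_ne_top hT),
      ENNReal.toReal_mul, ENNReal.toReal_natCast, Nat.card_coe_set_eq]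

theorem IsUltrametricDist.tendsto_card_inter_closedBall_div_measure {E : Set G} {ε : ℝ}
    (hε : 0 < ε) (hsep : E.Pairwise (ε ≤ dist · ·)) {f : G → ℝ} (hf : Integrable f μ)
    (hpos : 0 ≤ f) (hint : 0 < ∫ x, f x ∂μ) (htile : ∀ᵐ x ∂μ, ∑' l : E, f (x - l) = 1)
    (x₀ : G) :
    Tendsto (fun r => (Nat.card ↥(E ∩ closedBall x₀ r) : ℝ) / (μ (closedBall x₀ r)).toReal)
      atTop (𝓝 (1 / ∫ x, f x ∂μ)) := by
  set ρ := μ.withDensity (ENNReal.ofReal ∘ f)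
  have hρ : ρ Set.univ = ENNReal.ofReal (∫ x, f x ∂μ) := by
    rw [withDensity_apply _ MeasurableSet.univ, setLIntegral_univ,
      ofReal_integral_eq_lintegral_ofReal hf (Eventually.of_forall hpos)]
    rfl
  have : IsFiniteMeasure ρ := ⟨by rw [hρ]; exact ENNReal.ofReal_lt_top⟩
  choose! t ht₀ ht heq using fun r (hr : ε ≤ r) => toReal_measure_closedBall_eq_card_mul_add μ hε
    hsep hr (ENNReal.measurable_ofReal.comp_aemeasurable hf.aemeasurable)
    (htile.mono fun x hx => ENNReal.tsum_ofReal_eq_one (fun _ => hpos _) hx) x₀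
  refine tendsto_div_of_eq_mul_add hint.ne' ?_ (eventually_ge_atTop ε |>.mono heq) ?_ ?_
  · filter_upwards [eventually_gt_atTop 0] with r hr
    exact ENNReal.toReal_pos (measure_closedBall_pos μ x₀ hr).ne' measure_closedBall_lt_top.ne
  · have h := (ENNReal.tendsto_toReal (measure_ne_top ρ _)).comp
      (tendsto_measure_closedBall_atTop ρ (0 : G))
    rwa [hρ, ENNReal.toReal_ofReal hint.le] at h
  · have hlim := ((ENNReal.tendsto_toReal ENNReal.zero_ne_top).comp
      (tendsto_measure_compl_closedBall_atTop ρ (0 : G))).div_const (μ (ball (0 : G) ε)).toReal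
    rw [ENNReal.toReal_zero, zero_div] at hlim
    refine squeeze_zero' ?_ (eventually_ge_atTop ε |>.mono ht) hlim
    filter_upwards [eventually_ge_atTop ε] with r hr
    exact div_nonneg (ht₀ r hr) ENNReal.toReal_nonneg

end Ultrametric

instance inst_s17 (p : ℕ) [Fact p.Prime] : (haarQp p).IsAddHaarMeasure :=
  Measure.isAddHaarMeasure_addHaarMeasure _

/-- If a uniformly discrete `E` and a nonnegative `f ∈ L¹(ℚ_p)` with positive integral
satisfy `∑_{λ∈E} f(x-λ) = 1` a.e., then `E` has a bounded density: for every `x₀`,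
`Card(E ∩ B(x₀,p^k))/m(B(x₀,p^k))` converges as `k → ∞` to `1/∫ f dm`. -/
theorem stmt17 (p : ℕ) [Fact p.Prime] (E : Set ℚ_[p])
    (hE : ∃ ε > (0:ℝ), ∀ x ∈ E, ∀ y ∈ E, x ≠ y → ε ≤ ‖x - y‖)
    (f : ℚ_[p] → ℝ) (hf : Integrable f (haarQp p)) (hpos : ∀ x, 0 ≤ f x)
    (hint : 0 < ∫ x, f x ∂(haarQp p))
    (htile : ∀ᵐ x ∂(haarQp p), ∑' l : E, f (x - l) = 1) :
    ∀ x₀ : ℚ_[p], Filter.Tendsto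
      (fun k : ℕ => (Nat.card ↥(E ∩ {x : ℚ_[p] | ‖x - x₀‖ ≤ (p : ℝ) ^ k}) : ℝ)
        / (haarQp p {x : ℚ_[p] | ‖x - x₀‖ ≤ (p : ℝ) ^ k}).toReal)
      Filter.atTop (nhds (1 / ∫ x, f x ∂(haarQp p))) := by
  intro x₀
  obtain ⟨ε, hε, hsep⟩ := hE
  have hp : (1 : ℝ) < p := by exact_mod_cast (Fact.out : p.Prime).one_lt
  have hsep' : E.Pairwise (ε ≤ dist · ·) := fun x hx y hy hxy =>
    (hsep x hx y hy hxy).trans_eq (dist_eq_norm x y).symm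
  exact (IsUltrametricDist.tendsto_card_inter_closedBall_div_measure (haarQp p) hε hsep' hf hpos
    hint htile x₀).comp (tendsto_pow_atTop_atTop_of_one_lt hp)
end

section
/- Let p be a prime and Ω ⊂ ℚ_p a Borel set of positive finite Haar measure all of whose points are density points. Then the support of the continuous function ξ ↦ m(Ω ∩ (Ω + ξ)) equals the closure of the difference set Ω - Ω; in particular, if this support is compact then Ω is bounded. -/
open MeasureTheory Pointwise

instance haarQp_isAddHaar (p : ℕ) [Fact p.Prime] : (haarQp p).IsAddHaarMeasure :=
  Measure.isAddHaarMeasure_addHaarMeasure _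

lemma haarQp_preimage_sub (p : ℕ) [Fact p.Prime] (s : Set ℚ_[p]) (ξ : ℚ_[p]) :
    haarQp p ((fun y => y - ξ) ⁻¹' s) = haarQp p s := by
  simp only [sub_eq_add_neg]
  exact measure_preimage_add_right _ _ _

/-- For a Borel set `Ω ⊂ ℚ_p` of positive finite measure all of whose points are density
points, the support of the continuous function `ξ ↦ m(Ω ∩ (Ω + ξ))` equals the closure
of `Ω - Ω`; in particular, if this support is compact then `Ω` is bounded. -/
theorem stmt18 (p : ℕ) [Fact p.Prime] (Ω : Set ℚ_[p]) (hΩ : MeasurableSet Ω)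
    (h0 : 0 < haarQp p Ω) (hfin : haarQp p Ω < ⊤)
    (hdens : ∀ x ∈ Ω, Filter.Tendsto
      (fun n : ℕ => (haarQp p (Metric.closedBall x ((p : ℝ) ^ (-(n : ℤ))) ∩ Ω)).toReal
        / (haarQp p (Metric.closedBall x ((p : ℝ) ^ (-(n : ℤ))))).toReal)
      Filter.atTop (nhds 1)) :
    tsupport (fun ξ : ℚ_[p] => (haarQp p (Ω ∩ {y | y - ξ ∈ Ω})).toReal)
        = closure (Ω - Ω) ∧
      (IsCompact (tsupport (fun ξ : ℚ_[p] => (haarQp p (Ω ∩ {y | y - ξ ∈ Ω})).toReal)) →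
        Bornology.IsBounded Ω) := by
  set f : ℚ_[p] → ℝ := fun ξ => (haarQp p (Ω ∩ {y | y - ξ ∈ Ω})).toReal with hf
  -- support f ⊆ Ω - Ω
  have hsupp_sub : Function.support f ⊆ Ω - Ω := by
    intro ξ hξ
    have hne : haarQp p (Ω ∩ {y | y - ξ ∈ Ω}) ≠ 0 := by
      intro h
      apply hξ
      simp [hf, h]
    obtain ⟨y, hyΩ, hy2⟩ := nonempty_of_measure_ne_zero hne
    exact ⟨y, hyΩ, y - ξ, hy2, by ring⟩
  -- Ω - Ω ⊆ support f
  have hsub_supp : Ω - Ω ⊆ Function.support f := by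
    rintro ξ ⟨a, ha, b, hb, rfl⟩
    set ξ := a - b with hξdef
    have h34 : (3 / 4 : ℝ) < 1 := by norm_num
    obtain ⟨n, hna, hnb⟩ :=
      (((hdens a ha).eventually (eventually_gt_nhds h34)).and
        ((hdens b hb).eventually (eventually_gt_nhds h34))).exists
    set r : ℝ := (p : ℝ) ^ (-(n : ℤ)) with hr
    have hrpos : 0 < r := by
      apply zpow_pos
      exact_mod_cast (Fact.out : p.Prime).pos
    set Ba := Metric.closedBall a r with hBa
    set Bb := Metric.closedBall b r with hBb
    -- ball measure positive and finite
    have hvpos : 0 < haarQp p Ba :=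
      lt_of_lt_of_le (Metric.measure_ball_pos _ a hrpos)
        (measure_mono Metric.ball_subset_closedBall)
    have hvfin : haarQp p Ba < ⊤ := (isCompact_closedBall a r).measure_lt_top
    have hvbfin : haarQp p Bb < ⊤ := (isCompact_closedBall b r).measure_lt_top
    -- the shift map
    have hpre : (fun y => y - ξ) ⁻¹' Bb = Ba := by
      ext y
      simp only [Set.mem_preimage, hBa, hBb, Metric.mem_closedBall, dist_eq_norm, hξdef]
      constructor <;> intro h <;> [skip; skip] <;>
        · convert h using 2
          ring
    have hT : haarQp p ((fun y => y - ξ) ⁻¹' (Ω ∩ Bb)) = haarQp p (Ω ∩ Bb) :=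
      haarQp_preimage_sub p _ ξ
    have hveq : haarQp p Bb = haarQp p Ba := by
      rw [← hpre, haarQp_preimage_sub]
    -- real versions
    have hva : 0 < (haarQp p Ba).toReal := ENNReal.toReal_pos hvpos.ne' hvfin.ne
    have hSa : (3 / 4) * (haarQp p Ba).toReal < (haarQp p (Ba ∩ Ω)).toReal :=
      (lt_div_iff₀ hva).mp hna
    have hSb : (3 / 4) * (haarQp p Ba).toReal < (haarQp p (Bb ∩ Ω)).toReal := by
      have := (lt_div_iff₀ (by rw [hveq]; exact hva)).mp hnb
      rwa [hveq] at this
    -- the key positivity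
    have hkey : haarQp p (Ω ∩ {y | y - ξ ∈ Ω}) ≠ 0 := by
      intro hzero
      set S := Ba ∩ Ω with hS
      set T := (fun y => y - ξ) ⁻¹' (Ω ∩ Bb) with hTdef
      have hTmeas : MeasurableSet T :=
        ((hΩ.inter (measurableSet_closedBall)).preimage (measurable_sub_const ξ))
      have hSmeas : MeasurableSet S := measurableSet_closedBall.inter hΩ
      have hST : S ∩ T ⊆ Ω ∩ {y | y - ξ ∈ Ω} := by
        rintro y ⟨⟨_, hy2⟩, hy3, _⟩
        exact ⟨hy2, hy3⟩
      have hSTzero : haarQp p (S ∩ T) = 0 :=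
        measure_mono_null hST hzero
      have hSTB : S ∪ T ⊆ Ba := by
        rintro y (⟨hy, _⟩ | hy)
        · exact hy
        · rw [← hpre]; exact hy.2
      have hunion : haarQp p (S ∪ T) ≤ haarQp p Ba := measure_mono hSTB
      have hadd : haarQp p (S ∪ T) + haarQp p (S ∩ T) = haarQp p S + haarQp p T :=
        measure_union_add_inter S hTmeas
      rw [hSTzero, add_zero] at hadd
      have hsum : haarQp p S + haarQp p T ≤ haarQp p Ba := hadd ▸ hunion
      have hSfin : haarQp p S < ⊤ := lt_of_le_of_lt (measure_mono Set.inter_subset_left) hvfin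
      have hTfin : haarQp p T < ⊤ := by
        rw [hTdef, hT]
        exact lt_of_le_of_lt (measure_mono Set.inter_subset_right) hvbfin
      have hsumR : (haarQp p S).toReal + (haarQp p T).toReal ≤ (haarQp p Ba).toReal := by
        rw [← ENNReal.toReal_add hSfin.ne hTfin.ne]
        exact ENNReal.toReal_mono hvfin.ne hsum
      have hTval : (haarQp p T).toReal = (haarQp p (Bb ∩ Ω)).toReal := by
        rw [hTdef, hT, Set.inter_comm]
      have hSval : (haarQp p S).toReal = (haarQp p (Ba ∩ Ω)).toReal := rfl
      rw [hSval, hTval] at hsumR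
      nlinarith
    have hfinξ : haarQp p (Ω ∩ {y | y - ξ ∈ Ω}) ≠ ⊤ :=
      (lt_of_le_of_lt (measure_mono Set.inter_subset_left) hfin).ne
    simp only [Function.mem_support, hf]
    exact fun h => hkey (by
      rcases ENNReal.toReal_eq_zero_iff _ |>.mp h with h' | h'
      · exact h'
      · exact absurd h' hfinξ)
  have heq : tsupport f = closure (Ω - Ω) :=
    le_antisymm (closure_mono hsupp_sub) (closure_minimal
      (hsub_supp.trans subset_closure) isClosed_closure)
  refine ⟨heq, fun hcomp => ?_⟩
  rw [heq] at hcomp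
  have hbdd : Bornology.IsBounded (Ω - Ω) := hcomp.isBounded.subset subset_closure
  obtain ⟨b, hb⟩ := nonempty_of_measure_ne_zero h0.ne'
  have hΩsub : Ω ⊆ (Ω - Ω) + ({b} : Set ℚ_[p]) := by
    intro x hx
    exact ⟨x - b, ⟨x, hx, b, hb, rfl⟩, b, rfl, by ring⟩
  exact (hbdd.add Bornology.isBounded_singleton).subset hΩsub
end
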